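/- arXiv:1001.3800 — 7 statements merged into one kernel-verified Lean document; each statement's English description precedes it below -/
import Mathlib

section
/- If the almost contact structure on the Lie algebra 𝔤 is non-Abelian (i.e. [φx,φy] = −[x,y] for all x,y), then the cyclic sum of F vanishes, F(x,y,z) + F(y,z,x) + F(z,x,y) = 0 for all x,y,z ∈ 𝔤, and ξ is Killing, i.e. g(∇_xξ, y) + g(∇_yξ, x) = 0 for all x,y ∈ 𝔤 (so the induced left-invariant almost contact B-metric manifold belongs to the class F₃⊕F₇). -/
/-!
Since `φ ξ = 0`, the non-Abelian condition makes `ξ` central, and combined with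
`φ² = -id + η ⊗ ξ` it lets `φ` move across brackets: `⁅x, φ y⁆ = ⁅φ x, y⁆`. The B-metric
compatibility makes `φ` self-adjoint for `g`, so the Koszul formula expresses `2 F(x, y, z)`
through brackets alone; after moving every `φ` to the front of its bracket, the cyclic sum
cancels term by term. With `ξ` central, the Koszul formula gives
`2 g(∇_x ξ, y) = g(⁅y, x⁆, ξ)`, which is skew in `x, y`.
-/

section NonAbelian

variable {R L : Type*} [CommRing R] [LieRing L] [LieAlgebra R L]

theorem lie_eq_zero_of_lie_map_map_eq_neg {φ : L → L} {ξ : L}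
    (hna : ∀ x y, ⁅φ x, φ y⁆ = -⁅x, y⁆) (hξ : φ ξ = 0) (y : L) : ⁅ξ, y⁆ = 0 := by
  have h := hna ξ y
  rwa [hξ, zero_lie, eq_comm, neg_eq_zero] at h

theorem lie_map_eq_map_lie {φ : L → L} {ξ : L} {η : L → R}
    (hna : ∀ x y, ⁅φ x, φ y⁆ = -⁅x, y⁆) (hφφ : ∀ x, φ (φ x) = -x + η x • ξ)
    (hξ : ∀ y : L, ⁅ξ, y⁆ = 0) (x y : L) : ⁅x, φ y⁆ = ⁅φ x, y⁆ := by
  have h := hna (φ x) y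
  rw [hφφ, add_lie, neg_lie, smul_lie, hξ, smul_zero, add_zero] at h
  exact neg_injective h

end NonAbelian

theorem LinearMap.BilinForm.apply_map_eq_map_apply {R M : Type*} [CommRing R] [AddCommGroup M]
    [Module R M] {φ : M →ₗ[R] M} {ξ : M} {η : M →ₗ[R] R} {g : LinearMap.BilinForm R M}
    (hφφ : ∀ x, φ (φ x) = -x + η x • ξ) (hηφ : ∀ x, η (φ x) = 0)
    (hgφ : ∀ x y, g (φ x) (φ y) = -g x y + η x * η y) (hηg : ∀ x, η x = g x ξ) (x y : M) :
    g (φ x) y = g x (φ y) := by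
  have h := hgφ x (φ y)
  simp only [hφφ y, hηφ, map_add, map_neg, map_smul, smul_eq_mul, ← hηg] at h
  linear_combination -h

section LeviCivita

variable {R L : Type*} [Field R] [LieRing L] [LieAlgebra R L]
  {g : LinearMap.BilinForm R L} {nabla : L →ₗ[R] L →ₗ[R] L}

theorem two_mul_apply_nabla_map_sub_map_nabla {φ : L →ₗ[R] L}
    (hkos : ∀ x y z, 2 * g (nabla x y) z = g ⁅x, y⁆ z + g ⁅z, x⁆ y + g ⁅z, y⁆ x)
    (hgs : ∀ x y, g (φ x) y = g x (φ y)) (x y z : L) :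
    2 * g (nabla x (φ y) - φ (nabla x y)) z =
      g ⁅x, φ y⁆ z + g ⁅z, x⁆ (φ y) + g ⁅z, φ y⁆ x
        - (g ⁅x, y⁆ (φ z) + g ⁅φ z, x⁆ y + g ⁅φ z, y⁆ x) := by
  rw [map_sub, LinearMap.sub_apply, hgs]
  linear_combination hkos x (φ y) z - hkos x y (φ z)

variable [NeZero (2 : R)]

theorem cyclic_sum_apply_nabla_map_sub_map_nabla_eq_zero {φ : L →ₗ[R] L}
    (hkos : ∀ x y z, 2 * g (nabla x y) z = g ⁅x, y⁆ z + g ⁅z, x⁆ y + g ⁅z, y⁆ x)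
    (hgs : ∀ x y, g (φ x) y = g x (φ y)) (hsw : ∀ x y, ⁅x, φ y⁆ = ⁅φ x, y⁆) (x y z : L) :
    g (nabla x (φ y) - φ (nabla x y)) z + g (nabla y (φ z) - φ (nabla y z)) x
      + g (nabla z (φ x) - φ (nabla z x)) y = 0 := by
  have e₁ := two_mul_apply_nabla_map_sub_map_nabla hkos hgs x y z
  have e₂ := two_mul_apply_nabla_map_sub_map_nabla hkos hgs y z x
  have e₃ := two_mul_apply_nabla_map_sub_map_nabla hkos hgs z x y
  simp only [hsw] at e₁ e₂ e₃
  refine (mul_eq_zero.mp ?_).resolve_left two_ne_zero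
  linear_combination e₁ + e₂ + e₃

theorem apply_nabla_add_apply_nabla_eq_zero_of_lie_eq_zero {ξ : L}
    (hkos : ∀ x y z, 2 * g (nabla x y) z = g ⁅x, y⁆ z + g ⁅z, x⁆ y + g ⁅z, y⁆ x)
    (hξ : ∀ y : L, ⁅y, ξ⁆ = 0) (x y : L) :
    g (nabla x ξ) y + g (nabla y ξ) x = 0 := by
  have h₁ := hkos x ξ y
  have h₂ := hkos y ξ x
  simp only [hξ, map_zero, LinearMap.zero_apply, add_zero, zero_add] at h₁ h₂
  rw [← lie_skew y x, map_neg, LinearMap.neg_apply] at h₁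
  refine (mul_eq_zero.mp ?_).resolve_left two_ne_zero
  linear_combination h₁ + h₂

end LeviCivita

theorem statement_0_general
    {L : Type*} [LieRing L] [LieAlgebra ℝ L]
    (φ : L →ₗ[ℝ] L) (ξ : L) (η : L →ₗ[ℝ] ℝ) (g : LinearMap.BilinForm ℝ L)
    (hφξ : φ ξ = 0)
    (hφφ : ∀ x : L, φ (φ x) = -x + η x • ξ)
    (hηφ : ∀ x : L, η (φ x) = 0)
    (hgφ : ∀ x y : L, g (φ x) (φ y) = -(g x y) + η x * η y)
    (hηg : ∀ x : L, η x = g x ξ)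
    (nabla : L →ₗ[ℝ] L →ₗ[ℝ] L)
    (hkos : ∀ x y z : L, 2 * g (nabla x y) z = g ⁅x, y⁆ z + g ⁅z, x⁆ y + g ⁅z, y⁆ x)
    (F : L → L → L → ℝ)
    (hF : ∀ x y z : L, F x y z = g (nabla x (φ y) - φ (nabla x y)) z)
    (hna : ∀ x y : L, ⁅φ x, φ y⁆ = -⁅x, y⁆) :
    (∀ x y z : L, F x y z + F y z x + F z x y = 0) ∧
    (∀ x y : L, g (nabla x ξ) y + g (nabla y ξ) x = 0) := by
  have hcentral : ∀ y : L, ⁅ξ, y⁆ = 0 := lie_eq_zero_of_lie_map_map_eq_neg hna hφξ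
  have hgs := LinearMap.BilinForm.apply_map_eq_map_apply hφφ hηφ hgφ hηg
  have hsw := lie_map_eq_map_lie hna hφφ hcentral
  refine ⟨fun x y z => ?_, apply_nabla_add_apply_nabla_eq_zero_of_lie_eq_zero hkos
    fun y => by rw [← lie_skew, hcentral, neg_zero]⟩
  simpa only [hF] using cyclic_sum_apply_nabla_map_sub_map_nabla_eq_zero hkos hgs hsw x y z

theorem statement_0
    {L : Type*} [LieRing L] [LieAlgebra ℝ L] [Module.Finite ℝ L]
    (φ : L →ₗ[ℝ] L) (ξ : L) (η : L →ₗ[ℝ] ℝ) (g : LinearMap.BilinForm ℝ L)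
    (hsym : ∀ x y : L, g x y = g y x)
    (hnd : ∀ x : L, (∀ y : L, g x y = 0) → x = 0)
    (hφξ : φ ξ = 0)
    (hφφ : ∀ x : L, φ (φ x) = -x + η x • ξ)
    (hηφ : ∀ x : L, η (φ x) = 0)
    (hηξ : η ξ = 1)
    (hgφ : ∀ x y : L, g (φ x) (φ y) = -(g x y) + η x * η y)
    (hηg : ∀ x : L, η x = g x ξ)
    (nabla : L →ₗ[ℝ] L →ₗ[ℝ] L)
    (hkos : ∀ x y z : L, 2 * g (nabla x y) z = g ⁅x, y⁆ z + g ⁅z, x⁆ y + g ⁅z, y⁆ x)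
    (F : L → L → L → ℝ)
    (hF : ∀ x y z : L, F x y z = g (nabla x (φ y) - φ (nabla x y)) z)
    (hna : ∀ x y : L, ⁅φ x, φ y⁆ = -⁅x, y⁆) :
    (∀ x y z : L, F x y z + F y z x + F z x y = 0) ∧
    (∀ x y : L, g (nabla x ξ) y + g (nabla y ξ) x = 0) :=
  statement_0_general φ ξ η g hφξ hφφ hηφ hgφ hηg nabla hkos F hF hna
end

section
/- If the almost contact structure on the Lie algebra 𝔤 is non-Abelian, then 2F(x,y,z) = g([x,φy] − φ[x,y], z) + g([x,φz] − φ[x,z], y) for all x,y,z ∈ 𝔤. -/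
/-!
On a non-Abelian almost contact B-metric Lie algebra, `φ` is `g`-symmetric, `ξ` is central
(as `⁅w, ξ⁆ = -⁅φ w, φ ξ⁆`), and hence `⁅φ a, b⁆ = ⁅a, φ b⁆`. Subtract the Koszul formulas for
`2 g(∇_x (φ y), z)` and `2 g(∇_x y, φ z)`: by symmetry of `φ` the left side is `2 F(x, y, z)`,
the terms `g(⁅φ z, y⁆, x)` and `g(⁅z, φ y⁆, x)` cancel, and skew-symmetry of the bracket turns
what remains into the right-hand side.
-/

section NonAbelian

variable {R L : Type*} [CommRing R] [LieRing L] [LieAlgebra R L] (φ : L →ₗ[R] L)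

theorem lie_eq_zero_of_apply_eq_zero (hna : ∀ x y : L, ⁅φ x, φ y⁆ = -⁅x, y⁆)
    {ξ : L} (hφξ : φ ξ = 0) (w : L) : ⁅w, ξ⁆ = 0 := by
  rw [← neg_neg ⁅w, ξ⁆, ← hna, hφξ, lie_zero, neg_zero]

theorem lie_apply_left_eq_lie_apply_right (hna : ∀ x y : L, ⁅φ x, φ y⁆ = -⁅x, y⁆)
    (ξ : L) (η : L →ₗ[R] R) (hφξ : φ ξ = 0) (hφφ : ∀ x : L, φ (φ x) = -x + η x • ξ)
    (a b : L) : ⁅φ a, b⁆ = ⁅a, φ b⁆ := by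
  have h := hna a (φ b)
  rw [hφφ, lie_add, lie_smul, lie_eq_zero_of_apply_eq_zero φ hna hφξ, smul_zero, add_zero,
    lie_neg] at h
  exact neg_injective h

end NonAbelian

theorem LinearMap.BilinForm.isAdjointPair_of_almostContactBMetric {R M : Type*} [CommRing R]
    [AddCommGroup M] [Module R M] (g : LinearMap.BilinForm R M) (φ : M →ₗ[R] M) (ξ : M)
    (η : M →ₗ[R] R) (hφφ : ∀ x : M, φ (φ x) = -x + η x • ξ) (hηφ : ∀ x : M, η (φ x) = 0)
    (hgφ : ∀ x y : M, g (φ x) (φ y) = -(g x y) + η x * η y) (hηg : ∀ x : M, η x = g x ξ)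
    : LinearMap.IsAdjointPair g g φ φ := by
  intro a b
  have hb : b = η b • ξ - φ (φ b) := by rw [hφφ]; abel
  calc g (φ a) b = η b * g (φ a) ξ - g (φ a) (φ (φ b)) := by
        conv_lhs => rw [hb]
        rw [map_sub, map_smul, smul_eq_mul]
    _ = η b * η (φ a) - (-(g a (φ b)) + η a * η (φ b)) := by rw [← hηg, hgφ]
    _ = g a (φ b) := by rw [hηφ, hηφ]; ring

theorem statement_1_general
    {L : Type*} [LieRing L] [LieAlgebra ℝ L]
    (φ : L →ₗ[ℝ] L) (ξ : L) (η : L →ₗ[ℝ] ℝ) (g : LinearMap.BilinForm ℝ L)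
    (hφξ : φ ξ = 0)
    (hφφ : ∀ x : L, φ (φ x) = -x + η x • ξ)
    (hηφ : ∀ x : L, η (φ x) = 0)
    (hgφ : ∀ x y : L, g (φ x) (φ y) = -(g x y) + η x * η y)
    (hηg : ∀ x : L, η x = g x ξ)
    (nabla : L →ₗ[ℝ] L →ₗ[ℝ] L)
    (hkos : ∀ x y z : L, 2 * g (nabla x y) z = g ⁅x, y⁆ z + g ⁅z, x⁆ y + g ⁅z, y⁆ x)
    (F : L → L → L → ℝ)
    (hF : ∀ x y z : L, F x y z = g (nabla x (φ y) - φ (nabla x y)) z)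
    (hna : ∀ x y : L, ⁅φ x, φ y⁆ = -⁅x, y⁆) :
    ∀ x y z : L, 2 * F x y z =
      g (⁅x, φ y⁆ - φ ⁅x, y⁆) z + g (⁅x, φ z⁆ - φ ⁅x, z⁆) y := by
  have hsymm : ∀ a b : L, g (φ a) b = g a (φ b) :=
    g.isAdjointPair_of_almostContactBMetric φ ξ η hφφ hηφ hgφ hηg
  intro x y z
  have hkos_φy := hkos x (φ y) z
  have hkos_φz := hkos x y (φ z)
  have hφz_y : g ⁅φ z, y⁆ x = g ⁅z, φ y⁆ x := by
    rw [lie_apply_left_eq_lie_apply_right φ hna ξ η hφξ hφφ]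
  have hz_x : g ⁅z, x⁆ (φ y) = -g ⁅x, z⁆ (φ y) := by
    rw [← lie_skew x z, map_neg, LinearMap.neg_apply, neg_neg]
  have hφz_x : g ⁅φ z, x⁆ y = -g ⁅x, φ z⁆ y := by
    rw [← lie_skew x (φ z), map_neg, LinearMap.neg_apply, neg_neg]
  simp only [hF, map_sub, LinearMap.sub_apply, hsymm]
  linarith

theorem statement_1
    {L : Type*} [LieRing L] [LieAlgebra ℝ L] [Module.Finite ℝ L]
    (φ : L →ₗ[ℝ] L) (ξ : L) (η : L →ₗ[ℝ] ℝ) (g : LinearMap.BilinForm ℝ L)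
    (hsym : ∀ x y : L, g x y = g y x)
    (hnd : ∀ x : L, (∀ y : L, g x y = 0) → x = 0)
    (hφξ : φ ξ = 0)
    (hφφ : ∀ x : L, φ (φ x) = -x + η x • ξ)
    (hηφ : ∀ x : L, η (φ x) = 0)
    (hηξ : η ξ = 1)
    (hgφ : ∀ x y : L, g (φ x) (φ y) = -(g x y) + η x * η y)
    (hηg : ∀ x : L, η x = g x ξ)
    (nabla : L →ₗ[ℝ] L →ₗ[ℝ] L)
    (hkos : ∀ x y z : L, 2 * g (nabla x y) z = g ⁅x, y⁆ z + g ⁅z, x⁆ y + g ⁅z, y⁆ x)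
    (F : L → L → L → ℝ)
    (hF : ∀ x y z : L, F x y z = g (nabla x (φ y) - φ (nabla x y)) z)
    (hna : ∀ x y : L, ⁅φ x, φ y⁆ = -⁅x, y⁆) :
    ∀ x y z : L, 2 * F x y z =
      g (⁅x, φ y⁆ - φ ⁅x, y⁆) z + g (⁅x, φ z⁆ - φ ⁅x, z⁆) y :=
  statement_1_general φ ξ η g hφξ hφφ hηφ hgφ hηg nabla hkos F hF hna
end

section
/- Suppose the almost contact structure on the Lie algebra 𝔤 is non-Abelian. Then F(x,y,ξ) = 0 and F(ξ,y,z) = 0 for all x,y,z ∈ 𝔤 (the F₃-condition) if and only if η([x,y]) = 0 for all x,y ∈ 𝔤. -/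
/-!
For a non-Abelian structure, `φ ξ = 0` forces `ξ` into the centre of `𝔤`, so the Koszul formula
gives `2 g(∇_x y, ξ) = η⁅x, y⁆` and `2 g(∇_ξ y, z) = η⁅z, y⁆`. Hence `2 F(x, y, ξ) = η⁅x, φ y⁆`, while
`F(ξ, ·, ·)` vanishes identically because `φ` is `g`-symmetric and `⁅φ x, y⁆ = ⁅x, φ y⁆`.
Finally `φ² = -1 + η ⊗ ξ` with `ξ` central gives `η⁅x, φ (φ y)⁆ = -η⁅x, y⁆`, so `η⁅x, φ ·⁆ = 0`
is the same as `η⁅x, ·⁆ = 0`.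
-/

section

variable {R L : Type*} [CommRing R] [LieRing L] [LieAlgebra R L]

section Bracket

theorem lie_eq_zero_of_mem_center_right {c : L} (hc : c ∈ LieAlgebra.center R L) (x : L) :
    ⁅x, c⁆ = 0 :=
  (LieModule.mem_maxTrivSubmodule R L L c).1 hc x

theorem lie_eq_zero_of_mem_center_left {c : L} (hc : c ∈ LieAlgebra.center R L) (x : L) :
    ⁅c, x⁆ = 0 := by
  rw [← lie_skew, lie_eq_zero_of_mem_center_right hc, neg_zero]

variable {φ : L →ₗ[R] L} {ξ : L} {η : L →ₗ[R] R}

theorem mem_center_of_lie_apply_apply (hna : ∀ x y : L, ⁅φ x, φ y⁆ = -⁅x, y⁆) (hφξ : φ ξ = 0) :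
    ξ ∈ LieAlgebra.center R L := by
  refine (LieModule.mem_maxTrivSubmodule R L L ξ).2 fun y => ?_
  have h := hna y ξ
  rwa [hφξ, lie_zero, zero_eq_neg] at h

theorem lie_apply_apply_of_mem_center (hφφ : ∀ x : L, φ (φ x) = -x + η x • ξ)
    (hξ : ξ ∈ LieAlgebra.center R L) (x y : L) : ⁅x, φ (φ y)⁆ = -⁅x, y⁆ := by
  rw [hφφ, lie_add, lie_neg, lie_smul, lie_eq_zero_of_mem_center_right hξ, smul_zero,
    add_zero]

theorem apply_lie_eq_lie_apply (hna : ∀ x y : L, ⁅φ x, φ y⁆ = -⁅x, y⁆)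
    (hφφ : ∀ x : L, φ (φ x) = -x + η x • ξ) (hφξ : φ ξ = 0) (x y : L) :
    ⁅φ x, y⁆ = ⁅x, φ y⁆ := by
  have h := hna x (φ y)
  rwa [lie_apply_apply_of_mem_center hφφ (mem_center_of_lie_apply_apply hna hφξ), neg_inj] at h

end Bracket

theorem isSelfAdjoint_of_almostContactBMetric {φ : L →ₗ[R] L} {ξ : L} {η : L →ₗ[R] R}
    {g : LinearMap.BilinForm R L} (hφφ : ∀ x : L, φ (φ x) = -x + η x • ξ)
    (hηφ : ∀ x : L, η (φ x) = 0) (hgφ : ∀ x y : L, g (φ x) (φ y) = -(g x y) + η x * η y)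
    (hηg : ∀ x : L, η x = g x ξ) :
    LinearMap.IsSelfAdjoint g φ := by
  intro x y
  have h := hgφ x (φ y)
  rw [hφφ, map_add, map_neg, map_smul, ← hηg, hηφ, hηφ] at h
  simp only [smul_eq_mul, mul_zero, add_zero] at h
  linear_combination -h

section Koszul

variable {c : L} (g : LinearMap.BilinForm R L) (nabla : L →ₗ[R] L →ₗ[R] L)
  (hkos : ∀ x y z : L, 2 * g (nabla x y) z = g ⁅x, y⁆ z + g ⁅z, x⁆ y + g ⁅z, y⁆ x)
  (hc : c ∈ LieAlgebra.center R L)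
include hkos hc

theorem two_mul_nabla_apply_of_mem_center (x y : L) :
    2 * g (nabla x y) c = g ⁅x, y⁆ c := by
  rw [hkos, lie_eq_zero_of_mem_center_left hc, lie_eq_zero_of_mem_center_left hc]
  simp

theorem two_mul_nabla_of_mem_center_apply (y z : L) :
    2 * g (nabla c y) z = g ⁅z, y⁆ c := by
  rw [hkos, lie_eq_zero_of_mem_center_left hc, lie_eq_zero_of_mem_center_right hc]
  simp

variable {φ : L →ₗ[R] L} (hφ : LinearMap.IsSelfAdjoint g φ)
include hφ

theorem two_mul_nabla_sub_apply_of_mem_center (hφc : φ c = 0) (x y : L) :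
    2 * g (nabla x (φ y) - φ (nabla x y)) c = g ⁅x, φ y⁆ c := by
  rw [map_sub, LinearMap.sub_apply, hφ, hφc, map_zero, sub_zero,
    two_mul_nabla_apply_of_mem_center g nabla hkos hc]

theorem nabla_sub_of_mem_center_apply [NoZeroDivisors R] [NeZero (2 : R)]
    (hswap : ∀ x y : L, ⁅φ x, y⁆ = ⁅x, φ y⁆) (y z : L) :
    g (nabla c (φ y) - φ (nabla c y)) z = 0 := by
  refine (mul_eq_zero.1 ?_).resolve_left two_ne_zero
  rw [map_sub, LinearMap.sub_apply, hφ, mul_sub, two_mul_nabla_of_mem_center_apply g nabla hkos hc,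
    two_mul_nabla_of_mem_center_apply g nabla hkos hc, hswap, sub_self]

end Koszul

end

theorem statement_2_general
    {L : Type*} [LieRing L] [LieAlgebra ℝ L]
    (φ : L →ₗ[ℝ] L) (ξ : L) (η : L →ₗ[ℝ] ℝ) (g : LinearMap.BilinForm ℝ L)
    (hφξ : φ ξ = 0)
    (hφφ : ∀ x : L, φ (φ x) = -x + η x • ξ)
    (hηφ : ∀ x : L, η (φ x) = 0)
    (hgφ : ∀ x y : L, g (φ x) (φ y) = -(g x y) + η x * η y)
    (hηg : ∀ x : L, η x = g x ξ)
    (nabla : L →ₗ[ℝ] L →ₗ[ℝ] L)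
    (hkos : ∀ x y z : L, 2 * g (nabla x y) z = g ⁅x, y⁆ z + g ⁅z, x⁆ y + g ⁅z, y⁆ x)
    (F : L → L → L → ℝ)
    (hF : ∀ x y z : L, F x y z = g (nabla x (φ y) - φ (nabla x y)) z)
    (hna : ∀ x y : L, ⁅φ x, φ y⁆ = -⁅x, y⁆) :
    ((∀ x y : L, F x y ξ = 0) ∧ (∀ y z : L, F ξ y z = 0)) ↔
      (∀ x y : L, η ⁅x, y⁆ = 0) := by
  have hξ := mem_center_of_lie_apply_apply hna hφξ
  have hφ := isSelfAdjoint_of_almostContactBMetric hφφ hηφ hgφ hηg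
  have hFxyξ : ∀ x y, 2 * F x y ξ = η ⁅x, φ y⁆ := fun x y => by
    rw [hF, two_mul_nabla_sub_apply_of_mem_center g nabla hkos hξ hφ hφξ, hηg]
  have hFξyz : ∀ y z, F ξ y z = 0 := fun y z => by
    rw [hF]
    exact nabla_sub_of_mem_center_apply g nabla hkos hξ hφ (apply_lie_eq_lie_apply hna hφφ hφξ) y z
  refine ⟨fun ⟨hF0, _⟩ x y => ?_, fun hη => ⟨fun x y => ?_, hFξyz⟩⟩
  · have h := hFxyξ x (φ y)
    rw [hF0, lie_apply_apply_of_mem_center hφφ hξ, map_neg] at h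
    linarith
  · have h := hFxyξ x y
    rw [hη] at h
    linarith

theorem statement_2
    {L : Type*} [LieRing L] [LieAlgebra ℝ L] [Module.Finite ℝ L]
    (φ : L →ₗ[ℝ] L) (ξ : L) (η : L →ₗ[ℝ] ℝ) (g : LinearMap.BilinForm ℝ L)
    (hsym : ∀ x y : L, g x y = g y x)
    (hnd : ∀ x : L, (∀ y : L, g x y = 0) → x = 0)
    (hφξ : φ ξ = 0)
    (hφφ : ∀ x : L, φ (φ x) = -x + η x • ξ)
    (hηφ : ∀ x : L, η (φ x) = 0)
    (hηξ : η ξ = 1)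
    (hgφ : ∀ x y : L, g (φ x) (φ y) = -(g x y) + η x * η y)
    (hηg : ∀ x : L, η x = g x ξ)
    (nabla : L →ₗ[ℝ] L →ₗ[ℝ] L)
    (hkos : ∀ x y z : L, 2 * g (nabla x y) z = g ⁅x, y⁆ z + g ⁅z, x⁆ y + g ⁅z, y⁆ x)
    (F : L → L → L → ℝ)
    (hF : ∀ x y z : L, F x y z = g (nabla x (φ y) - φ (nabla x y)) z)
    (hna : ∀ x y : L, ⁅φ x, φ y⁆ = -⁅x, y⁆) :
    ((∀ x y : L, F x y ξ = 0) ∧ (∀ y z : L, F ξ y z = 0)) ↔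
      (∀ x y : L, η ⁅x, y⁆ = 0) :=
  statement_2_general φ ξ η g hφξ hφφ hηφ hgφ hηg nabla hkos F hF hna
end

section
/- Suppose the almost contact structure on the Lie algebra 𝔤 is non-Abelian. Then F(x,y,z) = −F(φx, φy, z) − F(φx, y, φz) for all x,y,z ∈ 𝔤 (the F₇-condition) if and only if φ[φx, y] = φ(φ[x,y]) for all x,y ∈ 𝔤. -/
/-!
Since the structure is non-Abelian, `ξ` is central and `⁅x, φ y⁆ = ⁅φ x, y⁆`. Feeding this into
the Koszul formula, the F₇-defect `F x y z + F (φx) (φy) z + F (φx) y (φz)` becomes, up to the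
factor 2, `g (D x y) z - g (D z x) y`, where `D x y = ⁅φx, y⁆ - φ⁅x, y⁆ - η⁅φx, y⁆ ξ` measures the
failure of the bracket condition. So the F₇-condition says that `g (D x y) z` is invariant under
`(x, y, z) ↦ (z, x, y)`. Since `D` takes values in `ker η` and anticommutes with `φ` in each slot,
this invariance combined with `(x, y, z) ↦ (φx, y, φz)` gives `g (D x y) z = -g (D x y) z`, so
`D = 0` by nondegeneracy.
-/

section

variable {R L : Type*} [CommRing R] [LieRing L] [LieAlgebra R L]

def IsNonAbelian (φ : L →ₗ[R] L) : Prop :=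
  ∀ x y : L, ⁅φ x, φ y⁆ = -⁅x, y⁆

namespace IsNonAbelian

variable {φ : L →ₗ[R] L}

theorem lie_eq_zero_of_map_eq_zero (hna : IsNonAbelian φ) {v : L} (hv : φ v = 0) (x : L) :
    ⁅x, v⁆ = 0 := by
  have h := hna x v
  rwa [hv, lie_zero, eq_comm, neg_eq_zero] at h

theorem lie_eq_zero_of_map_eq_zero_left (hna : IsNonAbelian φ) {v : L} (hv : φ v = 0) (x : L) :
    ⁅v, x⁆ = 0 := by
  rw [← lie_skew, hna.lie_eq_zero_of_map_eq_zero hv, neg_zero]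

theorem lie_map_comm (hna : IsNonAbelian φ) {ξ : L} {η : L →ₗ[R] R} (hφξ : φ ξ = 0)
    (hφφ : ∀ x : L, φ (φ x) = -x + η x • ξ) (x y : L) : ⁅x, φ y⁆ = ⁅φ x, y⁆ := by
  have h := hna x (φ y)
  rw [hφφ, lie_add, lie_smul, hna.lie_eq_zero_of_map_eq_zero hφξ, smul_zero, add_zero,
    lie_neg] at h
  exact (neg_inj.mp h).symm

end IsNonAbelian

theorem isAdjointPair_self {φ : L →ₗ[R] L} {ξ : L} {η : L →ₗ[R] R}
    {g : LinearMap.BilinForm R L} (hφφ : ∀ x : L, φ (φ x) = -x + η x • ξ)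
    (hηφ : ∀ x : L, η (φ x) = 0) (hgφ : ∀ x y : L, g (φ x) (φ y) = -(g x y) + η x * η y)
    (hηg : ∀ x : L, η x = g x ξ) : g.IsAdjointPair g φ φ := by
  intro x y
  have h := hgφ x (φ y)
  simp only [hφφ, hηφ, map_add, map_neg, map_smul, smul_eq_mul, ← hηg, mul_zero, add_zero] at h
  linear_combination -h

def fundamentalTensor (g : LinearMap.BilinForm R L) (φ : L →ₗ[R] L) (nabla : L →ₗ[R] L →ₗ[R] L)
    (x y z : L) : R :=
  g (nabla x (φ y) - φ (nabla x y)) z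

def bracketDefect (φ : L →ₗ[R] L) (ξ : L) (η : L →ₗ[R] R) (x y : L) : L :=
  ⁅φ x, y⁆ - φ ⁅x, y⁆ - η ⁅φ x, y⁆ • ξ

variable {φ : L →ₗ[R] L} {ξ : L} {η : L →ₗ[R] R} {g : LinearMap.BilinForm R L}

theorem two_mul_fundamentalTensor {nabla : L →ₗ[R] L →ₗ[R] L} (hsa : g.IsAdjointPair g φ φ)
    (hkos : ∀ x y z : L, 2 * g (nabla x y) z = g ⁅x, y⁆ z + g ⁅z, x⁆ y + g ⁅z, y⁆ x)
    (x y z : L) :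
    2 * fundamentalTensor g φ nabla x y z =
      (g ⁅x, φ y⁆ z + g ⁅z, x⁆ (φ y) + g ⁅z, φ y⁆ x)
        - (g ⁅x, y⁆ (φ z) + g ⁅φ z, x⁆ y + g ⁅φ z, y⁆ x) := by
  have h : fundamentalTensor g φ nabla x y z = g (nabla x (φ y)) z - g (nabla x y) (φ z) := by
    rw [fundamentalTensor, map_sub, LinearMap.sub_apply, hsa]
  linear_combination 2 * h + hkos x (φ y) z - hkos x y (φ z)

theorem bracketDefect_eq_zero_iff (hφξ : φ ξ = 0) (hφφ : ∀ x : L, φ (φ x) = -x + η x • ξ)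
    (hηφ : ∀ x : L, η (φ x) = 0) (x y : L) :
    bracketDefect φ ξ η x y = 0 ↔ φ ⁅φ x, y⁆ = φ (φ ⁅x, y⁆) := by
  constructor
  · intro h
    simpa [bracketDefect, hφξ, sub_eq_zero] using congrArg φ h
  · intro h
    have h' := congrArg φ h
    rw [hφφ, hφφ, hηφ, zero_smul, add_zero] at h'
    rw [bracketDefect]
    linear_combination (norm := module) -h'

theorem η_bracketDefect (hηφ : ∀ x : L, η (φ x) = 0) (hηξ : η ξ = 1) (x y : L) :
    η (bracketDefect φ ξ η x y) = 0 := by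
  simp [bracketDefect, hηφ, hηξ]

theorem apply_bracketDefect (hsa : g.IsAdjointPair g φ φ) (hsym : ∀ x y : L, g x y = g y x)
    (hηg : ∀ x : L, η x = g x ξ) (x y z : L) :
    g (bracketDefect φ ξ η x y) z = g ⁅φ x, y⁆ z - g ⁅x, y⁆ (φ z) - η ⁅φ x, y⁆ * η z := by
  simp only [bracketDefect, map_sub, map_smul, LinearMap.sub_apply, LinearMap.smul_apply,
    smul_eq_mul, hsa _ z, hηg z, hsym ξ z]

theorem bracketDefect_map_left (hna : IsNonAbelian φ) (hφξ : φ ξ = 0)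
    (hφφ : ∀ x : L, φ (φ x) = -x + η x • ξ) (x y : L) :
    bracketDefect φ ξ η (φ x) y = -φ (bracketDefect φ ξ η x y) := by
  simp only [bracketDefect, hφφ, add_lie, neg_lie, smul_lie,
    hna.lie_eq_zero_of_map_eq_zero_left hφξ, smul_zero, add_zero,
    map_sub, map_smul, map_neg, hφξ, sub_zero]
  module

theorem bracketDefect_map_right (hna : IsNonAbelian φ) (hφξ : φ ξ = 0)
    (hφφ : ∀ x : L, φ (φ x) = -x + η x • ξ) (x y : L) :
    bracketDefect φ ξ η x (φ y) = -φ (bracketDefect φ ξ η x y) := by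
  simp only [bracketDefect, hna x y, ← hna.lie_map_comm hφξ hφφ, map_neg, map_sub, map_smul,
    hφξ, smul_zero, sub_zero, hφφ, neg_smul]
  module

theorem two_mul_fundamentalTensor_sum {nabla : L →ₗ[R] L →ₗ[R] L} (hna : IsNonAbelian φ)
    (hsym : ∀ x y : L, g x y = g y x) (hφξ : φ ξ = 0) (hφφ : ∀ x : L, φ (φ x) = -x + η x • ξ)
    (hηφ : ∀ x : L, η (φ x) = 0) (hgφ : ∀ x y : L, g (φ x) (φ y) = -(g x y) + η x * η y)
    (hηg : ∀ x : L, η x = g x ξ)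
    (hkos : ∀ x y z : L, 2 * g (nabla x y) z = g ⁅x, y⁆ z + g ⁅z, x⁆ y + g ⁅z, y⁆ x)
    (x y z : L) :
    2 * (fundamentalTensor g φ nabla x y z + fundamentalTensor g φ nabla (φ x) (φ y) z
        + fundamentalTensor g φ nabla (φ x) y (φ z)) =
      g (bracketDefect φ ξ η x y) z - g (bracketDefect φ ξ η z x) y := by
  have hsa := isAdjointPair_self hφφ hηφ hgφ hηg
  have hgξ : ∀ u : L, g u ξ = η u := fun u => (hηg u).symm
  have e1 := two_mul_fundamentalTensor hsa hkos x y z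
  have e2 := two_mul_fundamentalTensor hsa hkos (φ x) (φ y) z
  have e3 := two_mul_fundamentalTensor hsa hkos (φ x) y (φ z)
  -- move each `φ` to the first slot of its bracket, expand `φ ∘ φ`, and drop the central `ξ`
  simp only [hna.lie_map_comm hφξ hφφ, hφφ, lie_add, add_lie, lie_neg, neg_lie, lie_smul,
    smul_lie, hna.lie_eq_zero_of_map_eq_zero hφξ, hna.lie_eq_zero_of_map_eq_zero_left hφξ,
    hφξ, smul_zero, add_zero, map_add, map_neg, map_smul, LinearMap.neg_apply, smul_eq_mul, hgξ]
    at e1 e2 e3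
  rw [apply_bracketDefect hsa hsym hηg, apply_bracketDefect hsa hsym hηg]
  linear_combination e1 + e2 + e3

end

theorem eq_zero_of_bilin_cyclic {R L : Type*} [CommRing R] [IsAddTorsionFree R] [AddCommGroup L]
    [Module R L] {φ : L →ₗ[R] L} {ξ : L} {η : L →ₗ[R] R} {g : LinearMap.BilinForm R L}
    (hnd : ∀ x : L, (∀ y : L, g x y = 0) → x = 0) (hφφ : ∀ x : L, φ (φ x) = -x + η x • ξ)
    (hgφ : ∀ x y : L, g (φ x) (φ y) = -(g x y) + η x * η y)
    {D : L → L → L} (hηD : ∀ x y : L, η (D x y) = 0)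
    (hDl : ∀ x y : L, D (φ x) y = -φ (D x y)) (hDr : ∀ x y : L, D x (φ y) = -φ (D x y))
    (hcyc : ∀ x y z : L, g (D x y) z = g (D z x) y) (x y : L) : D x y = 0 := by
  refine hnd _ fun z => self_eq_neg.mp ?_
  have hφ : g (D (φ x) y) (φ z) = g (D x y) z := by
    rw [hDl, map_neg, LinearMap.neg_apply, hgφ, hηD]
    ring
  have hφφD : D (φ z) (φ x) = -D z x := by
    rw [hDr, hDl, map_neg, neg_neg, hφφ, hηD, zero_smul, add_zero]
  calc g (D x y) z = g (D (φ x) y) (φ z) := hφ.symm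
    _ = g (D (φ z) (φ x)) y := hcyc _ _ _
    _ = -g (D x y) z := by rw [hφφD, map_neg, LinearMap.neg_apply, ← hcyc]

theorem statement_3_general
    {L : Type*} [LieRing L] [LieAlgebra ℝ L]
    (φ : L →ₗ[ℝ] L) (ξ : L) (η : L →ₗ[ℝ] ℝ) (g : LinearMap.BilinForm ℝ L)
    (hsym : ∀ x y : L, g x y = g y x)
    (hnd : ∀ x : L, (∀ y : L, g x y = 0) → x = 0)
    (hφξ : φ ξ = 0)
    (hφφ : ∀ x : L, φ (φ x) = -x + η x • ξ)
    (hηφ : ∀ x : L, η (φ x) = 0)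
    (hηξ : η ξ = 1)
    (hgφ : ∀ x y : L, g (φ x) (φ y) = -(g x y) + η x * η y)
    (hηg : ∀ x : L, η x = g x ξ)
    (nabla : L →ₗ[ℝ] L →ₗ[ℝ] L)
    (hkos : ∀ x y z : L, 2 * g (nabla x y) z = g ⁅x, y⁆ z + g ⁅z, x⁆ y + g ⁅z, y⁆ x)
    (F : L → L → L → ℝ)
    (hF : ∀ x y z : L, F x y z = g (nabla x (φ y) - φ (nabla x y)) z)
    (hna : ∀ x y : L, ⁅φ x, φ y⁆ = -⁅x, y⁆) :
    (∀ x y z : L, F x y z = -F (φ x) (φ y) z - F (φ x) y (φ z)) ↔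
      (∀ x y : L, φ ⁅φ x, y⁆ = φ (φ ⁅x, y⁆)) := by
  obtain rfl : F = fundamentalTensor g φ nabla := funext₃ hF
  have hsum := two_mul_fundamentalTensor_sum hna hsym hφξ hφφ hηφ hgφ hηg hkos
  simp_rw [← bracketDefect_eq_zero_iff hφξ hφφ hηφ]
  constructor
  · intro hF₇
    refine eq_zero_of_bilin_cyclic hnd hφφ hgφ (η_bracketDefect hηφ hηξ)
      (bracketDefect_map_left hna hφξ hφφ) (bracketDefect_map_right hna hφξ hφφ)
      fun x y z => ?_
    linear_combination 2 * hF₇ x y z - hsum x y z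
  · intro hD x y z
    have h := hsum x y z
    simp only [hD, map_zero, LinearMap.zero_apply, sub_zero] at h
    linear_combination h / 2

theorem statement_3
    {L : Type*} [LieRing L] [LieAlgebra ℝ L] [Module.Finite ℝ L]
    (φ : L →ₗ[ℝ] L) (ξ : L) (η : L →ₗ[ℝ] ℝ) (g : LinearMap.BilinForm ℝ L)
    (hsym : ∀ x y : L, g x y = g y x)
    (hnd : ∀ x : L, (∀ y : L, g x y = 0) → x = 0)
    (hφξ : φ ξ = 0)
    (hφφ : ∀ x : L, φ (φ x) = -x + η x • ξ)
    (hηφ : ∀ x : L, η (φ x) = 0)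
    (hηξ : η ξ = 1)
    (hgφ : ∀ x y : L, g (φ x) (φ y) = -(g x y) + η x * η y)
    (hηg : ∀ x : L, η x = g x ξ)
    (nabla : L →ₗ[ℝ] L →ₗ[ℝ] L)
    (hkos : ∀ x y z : L, 2 * g (nabla x y) z = g ⁅x, y⁆ z + g ⁅z, x⁆ y + g ⁅z, y⁆ x)
    (F : L → L → L → ℝ)
    (hF : ∀ x y z : L, F x y z = g (nabla x (φ y) - φ (nabla x y)) z)
    (hna : ∀ x y : L, ⁅φ x, φ y⁆ = -⁅x, y⁆) :
    (∀ x y z : L, F x y z = -F (φ x) (φ y) z - F (φ x) y (φ z)) ↔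
      (∀ x y : L, φ ⁅φ x, y⁆ = φ (φ ⁅x, y⁆)) :=
  statement_3_general φ ξ η g hsym hnd hφξ hφφ hηφ hηξ hgφ hηg nabla hkos F hF hna
end

section
/- Suppose the almost contact structure on the Lie algebra 𝔤 is non-Abelian. Then F(x,y,z) = 0 for all x,y,z ∈ 𝔤 (the F₀-condition) if and only if [x,y] = −φ[φx, y] for all x,y ∈ 𝔤. -/
/-!
Write `B(x, y) = [φx, y] - φ[x, y]`. Non-Abelianity makes `ξ` central and lets `φ` jump across a
bracket, `[x, φy] = [φx, y]`, and `φ` is `g`-self-adjoint. Feeding these into the Koszul formula gives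
`2 F(x, y, z) = g(B(x, y), z) - g(B(z, x), y)`, so `F = 0` exactly when `(x, y, z) ↦ g(B(x, y), z)`
is cyclically invariant. Combined with the identity `B(x, φy) = -φ B(x, y) - η[x, y] ξ` this forces
`η[x, y] = 0` and `g(B(x, y), φz) = g(B(x, y), ξ) = 0`, hence `B = 0` by nondegeneracy; and `B = 0`
is a rewriting of `[x, y] = -φ[φx, y]`.
-/

namespace AlmostContact

section LieBracket

variable {R L : Type*} [CommRing R] [LieRing L] [LieAlgebra R L]
  {φ : L →ₗ[R] L} {ξ : L} {η : L →ₗ[R] R}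

def bracketDefect (φ : L →ₗ[R] L) (x y : L) : L := ⁅φ x, y⁆ - φ ⁅x, y⁆

theorem lie_eq_zero_of_apply_eq_zero (hna : ∀ x y : L, ⁅φ x, φ y⁆ = -⁅x, y⁆) {z : L}
    (hz : φ z = 0) (y : L) : ⁅z, y⁆ = 0 := by
  have h := hna z y
  rw [hz, zero_lie] at h
  exact neg_eq_zero.mp h.symm

theorem lie_apply_right_eq_lie_apply_left (hna : ∀ x y : L, ⁅φ x, φ y⁆ = -⁅x, y⁆)
    (hφξ : φ ξ = 0) (hφφ : ∀ x : L, φ (φ x) = -x + η x • ξ) (x y : L) :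
    ⁅x, φ y⁆ = ⁅φ x, y⁆ := by
  have h := hna (φ x) y
  rw [hφφ, add_lie, neg_lie, smul_lie, lie_eq_zero_of_apply_eq_zero hna hφξ, smul_zero,
    add_zero] at h
  exact neg_injective h

theorem bracketDefect_apply_left (hna : ∀ x y : L, ⁅φ x, φ y⁆ = -⁅x, y⁆) (hφξ : φ ξ = 0)
    (hφφ : ∀ x : L, φ (φ x) = -x + η x • ξ) (x y : L) :
    bracketDefect φ (φ x) y = bracketDefect φ x (φ y) := by
  rw [bracketDefect, bracketDefect, hφφ, add_lie, smul_lie,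
    lie_eq_zero_of_apply_eq_zero hna hφξ, smul_zero, add_zero, neg_lie, hna,
    lie_apply_right_eq_lie_apply_left hna hφξ hφφ]

theorem bracketDefect_apply_right (hna : ∀ x y : L, ⁅φ x, φ y⁆ = -⁅x, y⁆) (hφξ : φ ξ = 0)
    (hφφ : ∀ x : L, φ (φ x) = -x + η x • ξ) (x y : L) :
    bracketDefect φ x (φ y) = -φ (bracketDefect φ x y) - η ⁅x, y⁆ • ξ := by
  rw [bracketDefect, bracketDefect, hna, lie_apply_right_eq_lie_apply_left hna hφξ hφφ, map_sub,
    hφφ ⁅x, y⁆]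
  abel

theorem bracketDefect_eq_zero_of_apply_eq_zero (hna : ∀ x y : L, ⁅φ x, φ y⁆ = -⁅x, y⁆) {z : L}
    (hz : φ z = 0) (y : L) : bracketDefect φ z y = 0 := by
  simp [bracketDefect, hz, lie_eq_zero_of_apply_eq_zero hna hz]

theorem bracketDefect_eq_zero_iff (hna : ∀ x y : L, ⁅φ x, φ y⁆ = -⁅x, y⁆) (hφξ : φ ξ = 0)
    (hφφ : ∀ x : L, φ (φ x) = -x + η x • ξ) (hηφ : ∀ x : L, η (φ x) = 0) :
    (∀ x y : L, bracketDefect φ x y = 0) ↔ ∀ x y : L, ⁅x, y⁆ = -φ ⁅φ x, y⁆ := by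
  have hξ := lie_eq_zero_of_apply_eq_zero hna hφξ
  constructor
  · intro hB x y
    have hcomm : ∀ u v : L, ⁅φ u, v⁆ = φ ⁅u, v⁆ := fun u v => sub_eq_zero.mp (hB u v)
    -- `x = -φ (φ x)` up to a central multiple of `ξ`, so `[x, y]` lies in the image of `φ`
    have hηlie : η ⁅x, y⁆ = 0 := by
      have hx : ⁅x, y⁆ = -φ ⁅φ x, y⁆ := by
        rw [← hcomm, hφφ, add_lie, smul_lie, hξ, smul_zero, add_zero, neg_lie, neg_neg]
      rw [hx, map_neg, hηφ, neg_zero]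
    rw [hcomm, hφφ, hηlie, zero_smul, add_zero, neg_neg]
  · intro hC x y
    have h := hC (φ x) y
    rw [hφφ, add_lie, smul_lie, hξ, smul_zero, add_zero, neg_lie, map_neg, neg_neg] at h
    rw [bracketDefect, h, sub_self]

end LieBracket

section Metric

variable {R L : Type*} [CommRing R] [LieRing L] [LieAlgebra R L]
  {φ : L →ₗ[R] L} {ξ : L} {η : L →ₗ[R] R} {g : LinearMap.BilinForm R L}

theorem isSelfAdjoint_of_bMetric (hφφ : ∀ x : L, φ (φ x) = -x + η x • ξ)
    (hηφ : ∀ x : L, η (φ x) = 0) (hgφ : ∀ x y : L, g (φ x) (φ y) = -(g x y) + η x * η y)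
    (hηg : ∀ x : L, η x = g x ξ) : LinearMap.IsSelfAdjoint g φ := by
  intro x z
  have h := hgφ x (φ z)
  rw [hφφ, hηφ, mul_zero, map_add, map_neg, map_smul, ← hηg, hηφ, smul_zero, add_zero] at h
  exact neg_injective (h.trans (add_zero _))

theorem two_mul_apply_covariantDerivative (hna : ∀ x y : L, ⁅φ x, φ y⁆ = -⁅x, y⁆)
    (hφξ : φ ξ = 0) (hφφ : ∀ x : L, φ (φ x) = -x + η x • ξ) (hφg : LinearMap.IsSelfAdjoint g φ)
    {nabla : L →ₗ[R] L →ₗ[R] L}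
    (hkos : ∀ x y z : L, 2 * g (nabla x y) z = g ⁅x, y⁆ z + g ⁅z, x⁆ y + g ⁅z, y⁆ x)
    (x y z : L) :
    2 * g (nabla x (φ y) - φ (nabla x y)) z =
      g (bracketDefect φ x y) z - g (bracketDefect φ z x) y := by
  have hswap := lie_apply_right_eq_lie_apply_left hna hφξ hφφ
  have k₁ := hkos x (φ y) z
  have k₂ := hkos x y (φ z)
  rw [hswap x y, ← hφg ⁅z, x⁆ y, hswap z y] at k₁
  rw [← hφg ⁅x, y⁆ z] at k₂
  simp only [bracketDefect, map_sub, LinearMap.sub_apply, hφg (nabla x y) z]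
  linear_combination k₁ - k₂

theorem bracketDefect_eq_zero_of_cyclic [NoZeroDivisors R] [CharZero R]
    (hna : ∀ x y : L, ⁅φ x, φ y⁆ = -⁅x, y⁆) (hφξ : φ ξ = 0)
    (hφφ : ∀ x : L, φ (φ x) = -x + η x • ξ) (hηξ : η ξ = 1) (hηg : ∀ x : L, η x = g x ξ)
    (hsym : ∀ x y : L, g x y = g y x) (hnd : ∀ x : L, (∀ y : L, g x y = 0) → x = 0)
    (hφg : LinearMap.IsSelfAdjoint g φ)
    (hS : ∀ x y z : L, g (bracketDefect φ x y) z = g (bracketDefect φ z x) y) (x y : L) :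
    bracketDefect φ x y = 0 := by
  have hmove : ∀ x y z : L, g (bracketDefect φ x (φ y)) z = g (bracketDefect φ x y) (φ z) :=
    fun x y z => by
      rw [← bracketDefect_apply_left hna hφξ hφφ, hS, ← bracketDefect_apply_left hna hφξ hφφ,
        ← hS]
  have htwo : ∀ z : L, 2 * g (bracketDefect φ x y) (φ z) = -(η ⁅x, y⁆ * η z) := fun z => by
    have h := hmove x y z
    rw [bracketDefect_apply_right hna hφξ hφφ, map_sub, map_neg, map_smul, LinearMap.sub_apply,
      LinearMap.neg_apply, LinearMap.smul_apply, hφg, hsym ξ, ← hηg, smul_eq_mul] at h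
    linear_combination -h
  have hηlie : η ⁅x, y⁆ = 0 := by simpa [hφξ, hηξ] using (htwo ξ).symm
  have hφz : ∀ z : L, g (bracketDefect φ x y) (φ z) = 0 := fun z => by
    have h := htwo z
    rw [hηlie, zero_mul, neg_zero, mul_eq_zero] at h
    exact h.resolve_left two_ne_zero
  have hξz : g (bracketDefect φ x y) ξ = 0 := by
    rw [hS, bracketDefect_eq_zero_of_apply_eq_zero hna hφξ, map_zero, LinearMap.zero_apply]
  refine hnd _ fun w => ?_
  have hw : w = η w • ξ - φ (φ w) := by rw [hφφ]; abel
  rw [hw, map_sub, map_smul, hφz, hξz, smul_zero, sub_zero]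

end Metric

end AlmostContact

open AlmostContact in
theorem statement_4_general
    {L : Type*} [LieRing L] [LieAlgebra ℝ L]
    (φ : L →ₗ[ℝ] L) (ξ : L) (η : L →ₗ[ℝ] ℝ) (g : LinearMap.BilinForm ℝ L)
    (hsym : ∀ x y : L, g x y = g y x)
    (hnd : ∀ x : L, (∀ y : L, g x y = 0) → x = 0)
    (hφξ : φ ξ = 0)
    (hφφ : ∀ x : L, φ (φ x) = -x + η x • ξ)
    (hηφ : ∀ x : L, η (φ x) = 0)
    (hηξ : η ξ = 1)
    (hgφ : ∀ x y : L, g (φ x) (φ y) = -(g x y) + η x * η y)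
    (hηg : ∀ x : L, η x = g x ξ)
    (nabla : L →ₗ[ℝ] L →ₗ[ℝ] L)
    (hkos : ∀ x y z : L, 2 * g (nabla x y) z = g ⁅x, y⁆ z + g ⁅z, x⁆ y + g ⁅z, y⁆ x)
    (F : L → L → L → ℝ)
    (hF : ∀ x y z : L, F x y z = g (nabla x (φ y) - φ (nabla x y)) z)
    (hna : ∀ x y : L, ⁅φ x, φ y⁆ = -⁅x, y⁆) :
    (∀ x y z : L, F x y z = 0) ↔ (∀ x y : L, ⁅x, y⁆ = -φ ⁅φ x, y⁆) := by
  have hφg := isSelfAdjoint_of_bMetric hφφ hηφ hgφ hηg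
  have hF₂ : ∀ x y z : L,
      2 * F x y z = g (bracketDefect φ x y) z - g (bracketDefect φ z x) y := fun x y z => by
    rw [hF, two_mul_apply_covariantDerivative hna hφξ hφφ hφg hkos]
  rw [← bracketDefect_eq_zero_iff hna hφξ hφφ hηφ]
  constructor
  · intro hF₀
    refine bracketDefect_eq_zero_of_cyclic hna hφξ hφφ hηξ hηg hsym hnd hφg fun x y z => ?_
    linarith [hF₂ x y z, hF₀ x y z]
  · intro hB x y z
    have h := hF₂ x y z
    simp only [hB, map_zero, LinearMap.zero_apply, sub_zero] at h
    linarith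

theorem statement_4
    {L : Type*} [LieRing L] [LieAlgebra ℝ L] [Module.Finite ℝ L]
    (φ : L →ₗ[ℝ] L) (ξ : L) (η : L →ₗ[ℝ] ℝ) (g : LinearMap.BilinForm ℝ L)
    (hsym : ∀ x y : L, g x y = g y x)
    (hnd : ∀ x : L, (∀ y : L, g x y = 0) → x = 0)
    (hφξ : φ ξ = 0)
    (hφφ : ∀ x : L, φ (φ x) = -x + η x • ξ)
    (hηφ : ∀ x : L, η (φ x) = 0)
    (hηξ : η ξ = 1)
    (hgφ : ∀ x y : L, g (φ x) (φ y) = -(g x y) + η x * η y)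
    (hηg : ∀ x : L, η x = g x ξ)
    (nabla : L →ₗ[ℝ] L →ₗ[ℝ] L)
    (hkos : ∀ x y z : L, 2 * g (nabla x y) z = g ⁅x, y⁆ z + g ⁅z, x⁆ y + g ⁅z, y⁆ x)
    (F : L → L → L → ℝ)
    (hF : ∀ x y z : L, F x y z = g (nabla x (φ y) - φ (nabla x y)) z)
    (hna : ∀ x y : L, ⁅φ x, φ y⁆ = -⁅x, y⁆) :
    (∀ x y z : L, F x y z = 0) ↔ (∀ x y : L, ⁅x, y⁆ = -φ ⁅φ x, y⁆) :=
  statement_4_general φ ξ η g hsym hnd hφξ hφφ hηφ hηξ hgφ hηg nabla hkos F hF hna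
end

section
/- The structure (φ, ξ, η, g, [·,·]) on V = ℝ⁵ satisfies [φx, φy] = −[x,y] (the non-Abelian condition) and φ[φx, y] = φ(φ[x,y]) (the F₇-condition) for all x,y ∈ V; hence the induced left-invariant almost contact B-metric manifold belongs to the class F₇. Moreover, the F₀-condition [x,y] = −φ[φx,y] holds for all x,y ∈ V if and only if μ₁ = μ₂ = 0 (equivalently, the manifold is an F₀-manifold if and only if μ₁² + μ₂² = 0). -/
noncomputable section

/-- The underlying 5-dimensional real vector space. -/
abbrev V : Type := Fin 5 → ℝ

/-- The basis `E₁,…,E₅` (0-indexed: `E 0 = E₁`, …, `E 4 = E₅`). -/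
def E (i : Fin 5) : V := Pi.single i 1

/-- `ξ = E₅`. -/
def xiV : V := E 4

/-- The almost contact endomorphism `φ`. -/
def phiV (x : V) : V := ![-x 2, -x 3, x 0, x 1, 0]

/-- The contact form `η`. -/
def etaF (x : V) : ℝ := x 4

/-- The B-metric `g`. -/
def gB (x y : V) : ℝ := x 0 * y 0 + x 1 * y 1 - x 2 * y 2 - x 3 * y 3 + x 4 * y 4

/-- The signs `εᵢ = g(Eᵢ,Eᵢ)`. -/
def eps : Fin 5 → ℝ := ![1, 1, -1, -1, 1]

/-- The Lie bracket: the unique skew-symmetric bilinear bracket whose only nonzero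
basis brackets are `[E₁,E₂] = -[E₃,E₄] = -λ₁E₁ - λ₂E₂ + λ₃E₃ + λ₄E₄ + 2μ₁E₅` and
`[E₁,E₄] = -[E₂,E₃] = -λ₃E₁ - λ₄E₂ - λ₁E₃ - λ₂E₄ + 2μ₂E₅`. -/
def brkt (l1 l2 l3 l4 m1 m2 : ℝ) (x y : V) : V :=
  (x 0 * y 1 - x 1 * y 0 - x 2 * y 3 + x 3 * y 2) •
    (![-l1, -l2, l3, l4, 2 * m1] : V) +
  (x 0 * y 3 - x 3 * y 0 - x 1 * y 2 + x 2 * y 1) •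
    (![-l3, -l4, -l1, -l2, 2 * m2] : V)

/-- The torsion `T(x,y) = 2(η(x)∇_yξ − η(y)∇_xξ + g(∇_xξ,y)ξ)`. -/
def Tors (nabla : V → V → V) (x y : V) : V :=
  (2 : ℝ) • (etaF x • nabla y xiV - etaF y • nabla x xiV + gB (nabla x xiV) y • xiV)

/-- The φKT-connection `D_x y = ∇_x y + (1/2)T(x,y)`. -/
def Dconn (nabla : V → V → V) (x y : V) : V :=
  nabla x y + (1 / 2 : ℝ) • Tors nabla x y

/-- Curvature of a connection: `∇_x∇_y z − ∇_y∇_x z − ∇_{[x,y]}z`. -/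
def curv (br conn : V → V → V) (x y z : V) : V :=
  conn x (conn y z) - conn y (conn x z) - conn (br x y) z

/-- Curvature (0,4)-tensor. -/
def curv4 (br conn : V → V → V) (x y z w : V) : ℝ := gB (curv br conn x y z) w

/-- Ricci tensor. -/
def ricci (br conn : V → V → V) (y z : V) : ℝ :=
  ∑ i : Fin 5, eps i * curv4 br conn (E i) y z (E i)

/-- Scalar curvature. -/
def scal (br conn : V → V → V) : ℝ :=
  ∑ i : Fin 5, ∑ j : Fin 5, eps i * eps j * curv4 br conn (E i) (E j) (E j) (E i)

/-- `(∇_xφ)y = ∇_x(φy) − φ(∇_x y)`. -/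
def nphi (nabla : V → V → V) (x y : V) : V := nabla x (phiV y) - phiV (nabla x y)

/-- The square norm `‖∇φ‖²`. -/
def sqnormNphi (nabla : V → V → V) : ℝ :=
  ∑ i : Fin 5, ∑ k : Fin 5,
    eps i * eps k * gB (nphi nabla (E i) (E k)) (nphi nabla (E i) (E k))

/-! The bracket is `[x,y] = ω₁₂(x,y) A + ω₁₄(x,y) B` with `A = [E₁,E₂]`, `B = [E₁,E₄]`. Since `φ` turns
`A` into `B` and `B` into `−A` up to their `ξ`-components, `[φx,y]` differs from `φ[x,y]` only by a
multiple of `ξ = ker φ`; applying `φ` gives the `F₇`-condition. With `φ² = −id + η ⊗ ξ` the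
`F₀`-condition then reduces to `η([x,y]) = 2(μ₁ω₁₂ + μ₂ω₁₄)(x,y)` vanishing identically. -/

/-- `ω₁₂ = e¹∧e² − e³∧e⁴` (coordinates are 0-indexed). -/
def omega12 (x y : V) : ℝ := x 0 * y 1 - x 1 * y 0 - x 2 * y 3 + x 3 * y 2

/-- `ω₁₄ = e¹∧e⁴ − e²∧e³` (coordinates are 0-indexed). -/
def omega14 (x y : V) : ℝ := x 0 * y 3 - x 3 * y 0 - x 1 * y 2 + x 2 * y 1

lemma omega12_phiV_phiV (x y : V) : omega12 (phiV x) (phiV y) = -omega12 x y := by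
  simp only [omega12, phiV, Matrix.cons_val]; ring

lemma omega14_phiV_phiV (x y : V) : omega14 (phiV x) (phiV y) = -omega14 x y := by
  simp only [omega14, phiV, Matrix.cons_val]; ring

lemma phiV_add (v w : V) : phiV (v + w) = phiV v + phiV w := by
  ext i; fin_cases i <;> simp [phiV] <;> ring

lemma phiV_smul (c : ℝ) (v : V) : phiV (c • v) = c • phiV v := by
  ext i; fin_cases i <;> simp [phiV]

lemma phiV_xiV : phiV xiV = 0 := by
  ext i; fin_cases i <;> simp [phiV, xiV, E]

lemma phiV_phiV (v : V) : phiV (phiV v) = -v + etaF v • xiV := by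
  ext i; fin_cases i <;> simp [phiV, etaF, xiV, E]

lemma xiV_ne_zero : xiV ≠ 0 := by
  simp [xiV, E]

section Bracket

variable (l1 l2 l3 l4 m1 m2 : ℝ)

lemma brkt_eq_omega (x y : V) :
    brkt l1 l2 l3 l4 m1 m2 x y =
      omega12 x y • (![-l1, -l2, l3, l4, 2 * m1] : V) +
        omega14 x y • (![-l3, -l4, -l1, -l2, 2 * m2] : V) :=
  rfl

lemma brkt_phiV_phiV (x y : V) :
    brkt l1 l2 l3 l4 m1 m2 (phiV x) (phiV y) = -brkt l1 l2 l3 l4 m1 m2 x y := by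
  rw [brkt_eq_omega, brkt_eq_omega, omega12_phiV_phiV, omega14_phiV_phiV, neg_smul, neg_smul,
    neg_add]

lemma brkt_phiV_left (x y : V) :
    brkt l1 l2 l3 l4 m1 m2 (phiV x) y =
      phiV (brkt l1 l2 l3 l4 m1 m2 x y) +
        (2 * (m2 * omega12 x y - m1 * omega14 x y)) • xiV := by
  ext i; fin_cases i <;> simp [brkt, phiV, omega12, omega14, xiV, E] <;> ring

lemma phiV_brkt_phiV_left (x y : V) :
    phiV (brkt l1 l2 l3 l4 m1 m2 (phiV x) y) = phiV (phiV (brkt l1 l2 l3 l4 m1 m2 x y)) := by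
  rw [brkt_phiV_left, phiV_add, phiV_smul, phiV_xiV, smul_zero, add_zero]

lemma etaF_brkt (x y : V) :
    etaF (brkt l1 l2 l3 l4 m1 m2 x y) = 2 * (m1 * omega12 x y + m2 * omega14 x y) := by
  simp only [etaF, brkt, Pi.add_apply, Pi.smul_apply, smul_eq_mul, Matrix.cons_val, omega12,
    omega14]
  ring

lemma neg_phiV_brkt_phiV_left (x y : V) :
    -phiV (brkt l1 l2 l3 l4 m1 m2 (phiV x) y) =
      brkt l1 l2 l3 l4 m1 m2 x y - etaF (brkt l1 l2 l3 l4 m1 m2 x y) • xiV := by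
  rw [phiV_brkt_phiV_left, phiV_phiV, neg_add, neg_neg, sub_eq_add_neg]

lemma forall_etaF_brkt_eq_zero_iff :
    (∀ x y : V, etaF (brkt l1 l2 l3 l4 m1 m2 x y) = 0) ↔ m1 = 0 ∧ m2 = 0 := by
  simp only [etaF_brkt, mul_eq_zero, two_ne_zero, false_or]
  refine ⟨fun h => ⟨?_, ?_⟩, fun ⟨h1, h2⟩ x y => by simp [h1, h2]⟩
  · simpa [omega12, omega14, E] using h (E 0) (E 1)
  · simpa [omega12, omega14, E] using h (E 0) (E 3)

end Bracket

theorem statement_9 (l1 l2 l3 l4 m1 m2 : ℝ) :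
    (∀ x y : V, brkt l1 l2 l3 l4 m1 m2 (phiV x) (phiV y) = -brkt l1 l2 l3 l4 m1 m2 x y) ∧
    (∀ x y : V, phiV (brkt l1 l2 l3 l4 m1 m2 (phiV x) y) =
      phiV (phiV (brkt l1 l2 l3 l4 m1 m2 x y))) ∧
    ((∀ x y : V, brkt l1 l2 l3 l4 m1 m2 x y = -phiV (brkt l1 l2 l3 l4 m1 m2 (phiV x) y)) ↔
      (m1 = 0 ∧ m2 = 0)) := by
  refine ⟨brkt_phiV_phiV _ _ _ _ _ _, phiV_brkt_phiV_left _ _ _ _ _ _, ?_⟩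
  simp only [neg_phiV_brkt_phiV_left, eq_sub_iff_add_eq, add_eq_left, smul_eq_zero, xiV_ne_zero,
    or_false]
  exact forall_etaF_brkt_eq_zero_iff _ _ _ _ _ _
end
end

section
/- The connection D parallelizes its own torsion: T(x,y) = −T(y,x), T(x,y) = D_x y − D_y x − [x,y], and D_x(T(y,z)) − T(D_x y, z) − T(y, D_x z) = 0 for all x,y,z ∈ V (i.e. the φKT-connection D on this F₇-manifold has D-parallel torsion T). -/
/-!
The Koszul formula makes `∇` the Levi-Civita connection: torsion-free and metric. Since `ξ` is
central, `A := ∇ξ` is `g`-skew and `Aξ = 0`. Hence `T` is skew, `D` is metric with `Dξ = 0`, and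
`D` has torsion `T` because `∇` has none. As `T` is built from `g`, `η`, `ξ` and `A` alone, it is
`D`-parallel as soon as every `D_x` is linear and commutes with `A`. Only these two facts need
coordinates, and they are checked on `∇` solved from the Koszul formula on the basis.
-/

noncomputable section

lemma gB_comm (x y : V) : gB x y = gB y x := by
  simp only [gB]; ring

lemma gB_add_left (x y z : V) : gB (x + y) z = gB x z + gB y z := by
  simp only [gB, Pi.add_apply]; ring

lemma gB_sub_left (x y z : V) : gB (x - y) z = gB x z - gB y z := by
  simp only [gB, Pi.sub_apply]; ring

lemma gB_neg_left (x z : V) : gB (-x) z = -gB x z := by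
  simp only [gB, Pi.neg_apply]; ring

lemma gB_smul_left (c : ℝ) (x z : V) : gB (c • x) z = c * gB x z := by
  simp only [gB, Pi.smul_apply, smul_eq_mul]; ring

lemma gB_add_right (x y z : V) : gB x (y + z) = gB x y + gB x z := by
  rw [gB_comm, gB_add_left, gB_comm y, gB_comm z]

lemma gB_smul_right (c : ℝ) (x z : V) : gB x (c • z) = c * gB x z := by
  rw [gB_comm, gB_smul_left, gB_comm]

lemma gB_zero_right (x : V) : gB x 0 = 0 := by
  simp [gB]

lemma gB_zero_left (x : V) : gB 0 x = 0 := by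
  rw [gB_comm, gB_zero_right]

lemma gB_E_right (v : V) (i : Fin 5) : gB v (E i) = eps i * v i := by
  fin_cases i <;> simp [gB, E, eps]

lemma gB_xiV_right (x : V) : gB x xiV = etaF x := by
  simp [gB, xiV, E, etaF]

lemma gB_xiV_left (x : V) : gB xiV x = etaF x := by
  rw [gB_comm, gB_xiV_right]

lemma etaF_xiV : etaF xiV = 1 := by
  simp [etaF, xiV, E]

lemma eps_mul_self (i : Fin 5) : eps i * eps i = 1 := by
  fin_cases i <;> norm_num [eps]

lemma eq_of_forall_gB_eq {a b : V} (h : ∀ z, gB a z = gB b z) : a = b := by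
  funext i
  have hi := h (E i)
  rw [gB_E_right, gB_E_right] at hi
  exact mul_left_cancel₀ (left_ne_zero_of_mul_eq_one (eps_mul_self i)) hi

def IsKoszul (br nabla : V → V → V) : Prop :=
  ∀ x y z : V, 2 * gB (nabla x y) z = gB (br x y) z + gB (br z x) y + gB (br z y) x

/-- The Koszul formula paired with `E i`, solved for the `i`-th coordinate using `eps i ^ 2 = 1`. -/
def koszulConn (br : V → V → V) (x y : V) : V := fun i =>
  eps i * (gB (br x y) (E i) + gB (br (E i) x) y + gB (br (E i) y) x) / 2

section Koszul

variable {br nabla : V → V → V} (hK : IsKoszul br nabla)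
include hK

lemma IsKoszul.eq_koszulConn : nabla = koszulConn br := by
  funext x y i
  have hi := hK x y (E i)
  rw [gB_E_right] at hi
  simp only [koszulConn, ← hi]
  linear_combination -(nabla x y i) * eps_mul_self i

lemma IsKoszul.nabla_xiV_xiV (hξ : ∀ x, br x xiV = 0) : nabla xiV xiV = 0 := by
  refine eq_of_forall_gB_eq fun z => ?_
  have h := hK xiV xiV z
  simp only [hξ, gB_zero_left] at h
  rw [gB_zero_left]
  linarith

variable (hbr : ∀ x y, br x y = -br y x)
include hbr

lemma IsKoszul.nabla_sub_swap (x y : V) : nabla x y - nabla y x = br x y := by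
  refine eq_of_forall_gB_eq fun z => ?_
  have hxy := hK x y z
  have hyx := hK y x z
  rw [hbr y x, gB_neg_left] at hyx
  rw [gB_sub_left]
  linarith

lemma IsKoszul.gB_nabla_eq_neg (x y z : V) : gB (nabla x y) z = -gB y (nabla x z) := by
  have hy := hK x y z
  have hz := hK x z y
  rw [hbr x z, hbr y x, hbr y z, gB_neg_left, gB_neg_left, gB_neg_left] at hz
  rw [gB_comm y]
  linarith

lemma IsKoszul.gB_nabla_xiV_eq_neg (hξ : ∀ x, br x xiV = 0) (x y : V) :
    gB (nabla x xiV) y = -gB (nabla y xiV) x := by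
  have hx := hK x xiV y
  have hy := hK y xiV x
  simp only [hξ, gB_zero_left] at hx hy
  rw [hbr x y, gB_neg_left] at hy
  linarith

end Koszul

section Torsion

variable {nabla : V → V → V} (hskew : ∀ x y, gB (nabla x xiV) y = -gB (nabla y xiV) x)
include hskew

lemma Tors_swap (x y : V) : Tors nabla x y = -Tors nabla y x := by
  simp only [Tors, hskew x y]
  module

lemma gB_Tors_eq_neg (x y z : V) : gB (Tors nabla x y) z = -gB y (Tors nabla x z) := by
  rw [gB_comm y]
  simp only [Tors, gB_smul_left, gB_add_left, gB_sub_left, gB_xiV_left, hskew z y]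
  ring

lemma Dconn_xiV (hξ : nabla xiV xiV = 0) (x : V) : Dconn nabla x xiV = 0 := by
  have hx : gB (nabla x xiV) xiV = 0 := by rw [hskew, hξ, gB_zero_left, neg_zero]
  simp only [Dconn, Tors, hξ, hx, etaF_xiV]
  module

lemma gB_Dconn_eq_neg (hmet : ∀ x y z, gB (nabla x y) z = -gB y (nabla x z)) (x y z : V) :
    gB (Dconn nabla x y) z = -gB y (Dconn nabla x z) := by
  simp only [Dconn, gB_add_left, gB_add_right, gB_smul_left, gB_smul_right, hmet x y z,
    gB_Tors_eq_neg hskew x y z]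
  ring

lemma Dconn_sub_swap {br : V → V → V} (htf : ∀ x y, nabla x y - nabla y x = br x y)
    (x y : V) : Dconn nabla x y - Dconn nabla y x - br x y = Tors nabla x y := by
  simp only [Dconn, ← htf x y, Tors_swap hskew y x]
  module

lemma Tors_parallel_of_commute {D : V → V → V} (hlin : ∀ x, IsLinearMap ℝ (D x))
    (hmet : ∀ x y z, gB (D x y) z = -gB y (D x z)) (hξ : ∀ x, D x xiV = 0)
    (hcomm : ∀ x y, D x (nabla y xiV) = nabla (D x y) xiV) (x y z : V) :
    D x (Tors nabla y z) - Tors nabla (D x y) z - Tors nabla y (D x z) = 0 := by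
  have hη : ∀ w, etaF (D x w) = 0 := fun w => by
    rw [← gB_xiV_right, hmet, hξ, gB_zero_right, neg_zero]
  have hg : gB (nabla (D x y) xiV) z = -gB (nabla y xiV) (D x z) := by
    rw [hskew, gB_comm, hmet, hcomm, gB_comm, hskew, neg_neg]
  simp only [Tors, (hlin x).map_smul, (hlin x).map_add, (hlin x).map_sub, hcomm, hξ, hη, hg]
  module

end Torsion

section Brkt

variable (l1 l2 l3 l4 m1 m2 : ℝ)

lemma brkt_swap (x y : V) : brkt l1 l2 l3 l4 m1 m2 x y = -brkt l1 l2 l3 l4 m1 m2 y x := by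
  simp only [brkt, neg_add, ← neg_smul]
  congr 2 <;> ring

lemma brkt_xiV (x : V) : brkt l1 l2 l3 l4 m1 m2 x xiV = 0 := by
  simp [brkt, xiV, E]

lemma Dconn_koszulConn_isLinearMap (x : V) :
    IsLinearMap ℝ (Dconn (koszulConn (brkt l1 l2 l3 l4 m1 m2)) x) := by
  constructor
  · intro u v
    funext i
    fin_cases i <;> simp [Dconn, Tors, koszulConn, brkt, gB, E, eps, xiV, etaF] <;> ring
  · intro c u
    funext i
    fin_cases i <;> simp [Dconn, Tors, koszulConn, brkt, gB, E, eps, xiV, etaF] <;> ring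

lemma Dconn_koszulConn_comm (x y : V) :
    Dconn (koszulConn (brkt l1 l2 l3 l4 m1 m2)) x (koszulConn (brkt l1 l2 l3 l4 m1 m2) y xiV) =
      koszulConn (brkt l1 l2 l3 l4 m1 m2) (Dconn (koszulConn (brkt l1 l2 l3 l4 m1 m2)) x y)
        xiV := by
  funext i
  fin_cases i <;> simp [Dconn, Tors, koszulConn, brkt, gB, E, eps, xiV, etaF] <;> ring

end Brkt

theorem statement_11 (l1 l2 l3 l4 m1 m2 : ℝ)
    (nabla : V → V → V)
    (hkos : ∀ x y z : V, 2 * gB (nabla x y) z =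
      gB (brkt l1 l2 l3 l4 m1 m2 x y) z + gB (brkt l1 l2 l3 l4 m1 m2 z x) y +
        gB (brkt l1 l2 l3 l4 m1 m2 z y) x) :
    (∀ x y : V, Tors nabla x y = -Tors nabla y x) ∧
    (∀ x y : V, Tors nabla x y =
      Dconn nabla x y - Dconn nabla y x - brkt l1 l2 l3 l4 m1 m2 x y) ∧
    (∀ x y z : V, Dconn nabla x (Tors nabla y z) - Tors nabla (Dconn nabla x y) z -
      Tors nabla y (Dconn nabla x z) = 0) := by
  have hbr := brkt_swap l1 l2 l3 l4 m1 m2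
  have hK : IsKoszul (brkt l1 l2 l3 l4 m1 m2) nabla := hkos
  have hskew := hK.gB_nabla_xiV_eq_neg hbr (brkt_xiV l1 l2 l3 l4 m1 m2)
  refine ⟨Tors_swap hskew, fun x y => (Dconn_sub_swap hskew (hK.nabla_sub_swap hbr) x y).symm,
    ?_⟩
  have hDξ := Dconn_xiV hskew (hK.nabla_xiV_xiV (brkt_xiV l1 l2 l3 l4 m1 m2))
  have hDmet := gB_Dconn_eq_neg hskew (hK.gB_nabla_eq_neg hbr)
  obtain rfl := hK.eq_koszulConn
  exact Tors_parallel_of_commute hskew (Dconn_koszulConn_isLinearMap l1 l2 l3 l4 m1 m2) hDmet hDξ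
    (Dconn_koszulConn_comm l1 l2 l3 l4 m1 m2)
end
end
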